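/- Let Δ be a simplicial complex and let k > 0 be an integer with f_k(Δ) > 0. Then the chain of strict inequalities f_0(Δ) > (2!·f_1(Δ))^{1/2} > (3!·f_2(Δ))^{1/3} > (4!·f_3(Δ))^{1/4} > … > ((k+1)!·f_k(Δ))^{1/(k+1)} holds; that is, for every integer j with 1 ≤ j ≤ k, (j!·f_{j-1}(Δ))^{1/j} > ((j+1)!·f_j(Δ))^{1/(j+1)} as real numbers. -/

import Mathlib

/-- The number of faces of `Δ` with exactly `i` vertices (i.e. `f_{i-1}(Δ)`). -/
def faceCount {V : Type*} [DecidableEq V] (Δ : Finset (Finset V)) (i : ℕ) : ℕ :=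
  (Δ.filter fun s => s.card = i).card

/-!
Put `a_m(Δ) = m! f_{m-1}(Δ)`, the number of faces of size `m` with an ordering of their
vertices. Choosing the first vertex `v` of an ordered face gives
`a_{m+1}(Δ) = ∑_v a_m(lk v)`. If every link satisfies `a_{m+1}(lk v)^m ≤ a_m(lk v)^{m+1}`
and `a_{m+1}(lk v) ≤ c`, then `a_{m+1}(lk v) ≤ c^{1/(m+1)} a_m(lk v)`, and summing over `v` gives
`a_{m+2}(Δ)^{m+1} ≤ c · a_{m+1}(Δ)^{m+1}`. Induction over links with `c = a_{m+1}(Δ)` yields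
`a_{m+1}^m ≤ a_m^{m+1}`. For strictness, the link of `v` misses every face through `v`, so
`c = a_{m+1}(Δ) - (m+1)!` is already a valid bound.
-/

open Finset
open scoped Nat

lemma sum_pow_le_mul_sum_pow {ι : Type*} (s : Finset ι) {x y : ι → ℝ} {c : ℝ} {n : ℕ}
    (hn : n ≠ 0) (hx : ∀ i ∈ s, 0 ≤ x i) (hy : ∀ i ∈ s, 0 ≤ y i) (hc : 0 ≤ c)
    (h : ∀ i ∈ s, x i ^ n ≤ c * y i ^ n) :
    (∑ i ∈ s, x i) ^ n ≤ c * (∑ i ∈ s, y i) ^ n := by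
  set t := c ^ (n⁻¹ : ℝ)
  have ht : 0 ≤ t := Real.rpow_nonneg hc _
  have htn : t ^ n = c := Real.rpow_inv_natCast_pow hc hn
  have hle : ∑ i ∈ s, x i ≤ t * ∑ i ∈ s, y i := by
    rw [mul_sum]
    refine sum_le_sum fun i hi => ?_
    rw [← pow_le_pow_iff_left₀ (hx i hi) (mul_nonneg ht (hy i hi)) hn, mul_pow, htn]
    exact h i hi
  calc (∑ i ∈ s, x i) ^ n ≤ (t * ∑ i ∈ s, y i) ^ n := pow_le_pow_left₀ (sum_nonneg hx) hle n
    _ = c * (∑ i ∈ s, y i) ^ n := by rw [mul_pow, htn]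

lemma Real.rpow_one_div_succ_lt_of_pow_lt {x y : ℝ} (hx : 0 ≤ x) (hy : 0 ≤ y) {n : ℕ}
    (hn : n ≠ 0) (h : y ^ n < x ^ (n + 1)) :
    y ^ (1 / ((n : ℝ) + 1)) < x ^ (1 / (n : ℝ)) := by
  have hy' : (y ^ (1 / ((n : ℝ) + 1))) ^ ((n + 1) * n) = y ^ n := by
    rw [pow_mul, one_div, ← Nat.cast_succ, Real.rpow_inv_natCast_pow hy n.succ_ne_zero]
  have hx' : (x ^ (1 / (n : ℝ))) ^ ((n + 1) * n) = x ^ (n + 1) := by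
    rw [mul_comm, pow_mul, one_div, Real.rpow_inv_natCast_pow hx hn]
  refine lt_of_pow_lt_pow_left₀ ((n + 1) * n) (Real.rpow_nonneg hx _) ?_
  rwa [hy', hx']

lemma sum_card_filter_mem_eq_sum_card {α : Type*} [DecidableEq α] {U : Finset α}
    {B : Finset (Finset α)} (hB : ∀ t ∈ B, t ⊆ U) :
    ∑ a ∈ U, #{t ∈ B | a ∈ t} = ∑ t ∈ B, #t := by
  simp only [card_filter]
  rw [sum_comm]
  refine sum_congr rfl fun t ht => ?_
  rw [← card_filter, filter_mem_eq_inter, inter_eq_right.2 (hB t ht)]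

section

variable {V : Type*} [DecidableEq V]

def link (Δ : Finset (Finset V)) (v : V) : Finset (Finset V) :=
  {s ∈ Δ | v ∉ s ∧ insert v s ∈ Δ}

lemma IsLowerSet.link {Δ : Finset (Finset V)} (hΔ : IsLowerSet (Δ : Set (Finset V))) (v : V) :
    IsLowerSet (link Δ v : Set (Finset V)) := by
  intro B A hAB hB
  simp only [mem_coe, _root_.link, mem_filter] at hB ⊢
  exact ⟨hΔ hAB hB.1, fun hv => hB.2.1 (hAB hv), hΔ (insert_subset_insert v hAB) hB.2.2⟩

lemma faceCount_pos_of_le {Δ : Finset (Finset V)} (hΔ : IsLowerSet (Δ : Set (Finset V)))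
    {i m : ℕ} (him : i ≤ m) (hf : 0 < faceCount Δ m) : 0 < faceCount Δ i := by
  obtain ⟨σ, hσ⟩ := card_pos.1 hf
  rw [mem_filter] at hσ
  obtain ⟨τ, hτσ, hτ⟩ := exists_subset_card_eq (him.trans_eq hσ.2.symm)
  exact card_pos.2 ⟨τ, mem_filter.2 ⟨hΔ hτσ hσ.1, hτ⟩⟩

lemma faceCount_link_le (Δ : Finset (Finset V)) (v : V) (m : ℕ) :
    faceCount (link Δ v) m ≤ faceCount Δ m :=
  card_le_card (filter_subset_filter _ (filter_subset _ _))

lemma faceCount_link_lt {Δ : Finset (Finset V)} (hΔ : IsLowerSet (Δ : Set (Finset V)))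
    {v : V} {m : ℕ} (hm : m ≠ 0) (hf : 0 < faceCount (link Δ v) m) :
    faceCount (link Δ v) m < faceCount Δ m := by
  obtain ⟨σ, hσ⟩ := card_pos.1 hf
  simp only [link, mem_filter] at hσ
  obtain ⟨⟨-, hvσ, hvσΔ⟩, hσm⟩ := hσ
  obtain ⟨x, hx⟩ := card_pos.1 (hσm ▸ Nat.pos_of_ne_zero hm)
  set τ := insert v (σ.erase x)
  have hτΔ : τ ∈ Δ := hΔ (insert_subset_insert v (erase_subset x σ)) hvσΔ
  have hτm : τ.card = m := by
    rw [card_insert_of_notMem fun h => hvσ (mem_of_mem_erase h), card_erase_of_mem hx, hσm]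
    omega
  refine card_lt_card (ssubset_iff_of_subset (filter_subset_filter _ (filter_subset _ _)) |>.2
    ⟨τ, mem_filter.2 ⟨hτΔ, hτm⟩, fun h => ?_⟩)
  simp only [mem_filter] at h
  exact h.1.2.1 (mem_insert_self v _)

lemma faceCount_link_eq {Δ : Finset (Finset V)} (hΔ : IsLowerSet (Δ : Set (Finset V)))
    (v : V) (m : ℕ) :
    faceCount (link Δ v) m = #{s ∈ Δ.filter fun s => s.card = m + 1 | v ∈ s} := by
  refine card_nbij' (insert v) (fun s => s.erase v) (fun s hs => ?_) (fun s hs => ?_)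
    (fun s hs => ?_) (fun s hs => ?_)
  all_goals simp only [mem_coe, link, mem_filter] at hs
  · obtain ⟨⟨-, hvs, hvsΔ⟩, hsm⟩ := hs
    simp [hvsΔ, card_insert_of_notMem hvs, hsm]
  · obtain ⟨⟨hsΔ, hsm⟩, hvs⟩ := hs
    simp only [mem_coe, link, mem_filter, insert_erase hvs]
    refine ⟨⟨hΔ (erase_subset v s) hsΔ, notMem_erase v s, hsΔ⟩, ?_⟩
    rw [card_erase_of_mem hvs, hsm]
    rfl
  · exact erase_insert hs.1.2.1
  · exact insert_erase hs.2

lemma succ_mul_faceCount_succ {Δ : Finset (Finset V)} (hΔ : IsLowerSet (Δ : Set (Finset V)))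
    (m : ℕ) : (m + 1) * faceCount Δ (m + 1) = ∑ v ∈ Δ.sup id, faceCount (link Δ v) m := by
  simp_rw [faceCount_link_eq hΔ]
  rw [sum_card_filter_mem_eq_sum_card fun s hs => le_sup (f := id) (mem_filter.1 hs).1,
    sum_congr rfl fun s hs => (mem_filter.1 hs).2, sum_const, smul_eq_mul, mul_comm]
  rfl

def orderedFaceCount (Δ : Finset (Finset V)) (m : ℕ) : ℕ := m ! * faceCount Δ m

lemma orderedFaceCount_succ {Δ : Finset (Finset V)} (hΔ : IsLowerSet (Δ : Set (Finset V)))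
    (m : ℕ) : orderedFaceCount Δ (m + 1) = ∑ v ∈ Δ.sup id, orderedFaceCount (link Δ v) m := by
  rw [orderedFaceCount, Nat.factorial_succ, mul_comm (m + 1), mul_assoc,
    succ_mul_faceCount_succ hΔ, mul_sum]
  rfl

lemma orderedFaceCount_link_le (Δ : Finset (Finset V)) (v : V) (m : ℕ) :
    orderedFaceCount (link Δ v) m ≤ orderedFaceCount Δ m :=
  Nat.mul_le_mul_left _ (faceCount_link_le Δ v m)

lemma orderedFaceCount_link_add_factorial_le {Δ : Finset (Finset V)}
    (hΔ : IsLowerSet (Δ : Set (Finset V))) {v : V} {m : ℕ} (hm : m ≠ 0)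
    (hf : 0 < faceCount (link Δ v) m) :
    orderedFaceCount (link Δ v) m + m ! ≤ orderedFaceCount Δ m := by
  rw [orderedFaceCount, orderedFaceCount, ← Nat.mul_succ]
  exact Nat.mul_le_mul_left _ (faceCount_link_lt hΔ hm hf)

lemma orderedFaceCount_pow_le_of_links {Δ : Finset (Finset V)}
    (hΔ : IsLowerSet (Δ : Set (Finset V))) {j : ℕ} {c : ℝ} (hc : 0 ≤ c)
    (hlink : ∀ v ∈ Δ.sup id, 0 < faceCount (link Δ v) (j + 1) →
      (orderedFaceCount (link Δ v) (j + 1) : ℝ) ^ j ≤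
          (orderedFaceCount (link Δ v) j : ℝ) ^ (j + 1) ∧
        (orderedFaceCount (link Δ v) (j + 1) : ℝ) ≤ c) :
    (orderedFaceCount Δ (j + 1 + 1) : ℝ) ^ (j + 1) ≤
      c * (orderedFaceCount Δ (j + 1) : ℝ) ^ (j + 1) := by
  rw [orderedFaceCount_succ hΔ (j + 1), orderedFaceCount_succ hΔ j]
  push_cast
  refine sum_pow_le_mul_sum_pow _ j.succ_ne_zero (fun _ _ => by positivity)
    (fun _ _ => by positivity) hc fun v hv => ?_
  rcases (faceCount (link Δ v) (j + 1)).eq_zero_or_pos with h0 | hpos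
  · have hx0 : orderedFaceCount (link Δ v) (j + 1) = 0 := by
      rw [orderedFaceCount, h0, mul_zero]
    rw [hx0, Nat.cast_zero, zero_pow j.succ_ne_zero]
    positivity
  · obtain ⟨hpow, hle⟩ := hlink v hv hpos
    rw [pow_succ, mul_comm c]
    exact mul_le_mul hpow hle (Nat.cast_nonneg _) (by positivity)

theorem orderedFaceCount_succ_pow_le (j : ℕ) {Δ : Finset (Finset V)}
    (hΔ : IsLowerSet (Δ : Set (Finset V))) (hf : 0 < faceCount Δ (j + 1)) :
    (orderedFaceCount Δ (j + 1) : ℝ) ^ j ≤ (orderedFaceCount Δ j : ℝ) ^ (j + 1) := by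
  induction j generalizing Δ with
  | zero =>
    have hf0 := faceCount_pos_of_le hΔ (Nat.zero_le 1) hf
    simp only [pow_zero, zero_add, pow_one, orderedFaceCount, Nat.factorial_zero, one_mul]
    exact_mod_cast hf0
  | succ j ih =>
    rw [pow_succ' _ (j + 1)]
    exact orderedFaceCount_pow_le_of_links hΔ (Nat.cast_nonneg (α := ℝ) _) fun v _ hv =>
      ⟨ih (hΔ.link v) hv, by exact_mod_cast orderedFaceCount_link_le Δ v (j + 1)⟩

theorem orderedFaceCount_succ_pow_lt {Δ : Finset (Finset V)}
    (hΔ : IsLowerSet (Δ : Set (Finset V))) {j : ℕ} (hj : j ≠ 0)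
    (hf : 0 < faceCount Δ (j + 1)) :
    (orderedFaceCount Δ (j + 1) : ℝ) ^ j < (orderedFaceCount Δ j : ℝ) ^ (j + 1) := by
  obtain ⟨j, rfl⟩ := Nat.exists_eq_succ_of_ne_zero hj
  have hfact : (j + 1)! ≤ orderedFaceCount Δ (j + 1) :=
    Nat.le_mul_of_pos_right _ (faceCount_pos_of_le hΔ (Nat.le_succ _) hf)
  have hfact_pos : (0 : ℝ) < (j + 1)! := by exact_mod_cast (j + 1).factorial_pos
  have hstep := orderedFaceCount_pow_le_of_links hΔ
    (c := orderedFaceCount Δ (j + 1) - (j + 1)!) (by simpa using hfact) fun v _ hv =>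
    ⟨orderedFaceCount_succ_pow_le j (hΔ.link v) hv, le_sub_iff_add_le.2
      (by exact_mod_cast orderedFaceCount_link_add_factorial_le hΔ j.succ_ne_zero hv)⟩
  have hX : (0 : ℝ) < orderedFaceCount Δ (j + 1) := hfact_pos.trans_le (by exact_mod_cast hfact)
  set X : ℝ := (orderedFaceCount Δ (j + 1) : ℝ)
  calc (orderedFaceCount Δ (j + 1 + 1) : ℝ) ^ (j + 1)
      ≤ (X - (j + 1)!) * X ^ (j + 1) := hstep
    _ < X * X ^ (j + 1) := mul_lt_mul_of_pos_right (by linarith) (pow_pos hX _)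
    _ = X ^ (j + 1 + 1) := (pow_succ' X (j + 1)).symm

end

theorem stmt2_general {V : Type*} [DecidableEq V] (Δ : Finset (Finset V))
    (hΔ : ∀ B ∈ Δ, ∀ A ⊆ B, A ∈ Δ)
    (k : ℕ) (hf : 0 < faceCount Δ (k + 1)) :
    ∀ j : ℕ, 1 ≤ j → j ≤ k →
      ((j.factorial : ℝ) * (faceCount Δ j : ℝ)) ^ ((1 : ℝ) / (j : ℝ)) >
        (((j + 1).factorial : ℝ) * (faceCount Δ (j + 1) : ℝ)) ^ ((1 : ℝ) / ((j : ℝ) + 1)) := by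
  intro j hj hjk
  have hlow : IsLowerSet (Δ : Set (Finset V)) := fun B A hAB hB => hΔ B hB A hAB
  have key := orderedFaceCount_succ_pow_lt hlow (by omega)
    (faceCount_pos_of_le hlow (Nat.succ_le_succ hjk) hf)
  simp only [orderedFaceCount, Nat.cast_mul] at key
  exact Real.rpow_one_div_succ_lt_of_pow_lt (by positivity) (by positivity) (by omega) key

theorem stmt2 {V : Type*} [DecidableEq V] (Δ : Finset (Finset V))
    (hΔ : ∀ B ∈ Δ, ∀ A ⊆ B, A ∈ Δ)
    (k : ℕ) (hk : 0 < k) (hf : 0 < faceCount Δ (k + 1)) :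
    ∀ j : ℕ, 1 ≤ j → j ≤ k →
      ((j.factorial : ℝ) * (faceCount Δ j : ℝ)) ^ ((1 : ℝ) / (j : ℝ)) >
        (((j + 1).factorial : ℝ) * (faceCount Δ (j + 1) : ℝ)) ^ ((1 : ℝ) / ((j : ℝ) + 1)) :=
  stmt2_general Δ hΔ k hf
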